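/- arXiv:2010.07159 — 10 statements merged into one kernel-verified Lean document; each statement's English description precedes it below -/
import Mathlib

section
/- Any non-trivial quandle that is right-orderable is infinite, and any non-trivial quandle that is left-orderable is infinite. -/
structure PaperQuandle (Q : Type*) where
  op : Q → Q → Q
  inv : Q → Q → Q
  idem : ∀ x, op x x = x
  inv_op : ∀ x y, inv (op x y) y = x
  op_inv : ∀ x y, op (inv x y) y = x
  distrib : ∀ x y z, op (op x y) z = op (op x z) (op y z)

lemma strictMono_eq_id_of_finite {α : Type*} [Finite α] [LinearOrder α]
    {f : α → α} (hf : StrictMono f) : ∀ x, f x = x := by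
  have hb : Function.Bijective f := Finite.injective_iff_bijective.mp hf.injective
  let oi : α ≃o α := ⟨Equiv.ofBijective f hb, fun {a b} => hf.le_iff_le⟩
  have h : oi = OrderIso.refl α := Subsingleton.elim _ _
  intro x
  have := congrArg (fun g => g x) (congrArg (fun (e : α ≃o α) => (e : α → α)) h)
  exact this

/-- Any non-trivial right-orderable quandle is infinite, and any non-trivial
left-orderable quandle is infinite. -/
theorem nontrivial_orderable_quandle_infinite {Q : Type*} (q : PaperQuandle Q)
    (hnt : ¬ ∀ x y : Q, q.op x y = x) :
    ((∃ _ : LinearOrder Q, ∀ x y z : Q, x < y → q.op x z < q.op y z) → Infinite Q) ∧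
    ((∃ _ : LinearOrder Q, ∀ x y z : Q, x < y → q.op z x < q.op z y) → Infinite Q) := by
  constructor
  · rintro ⟨_, h⟩
    by_contra hinf
    have : Finite Q := not_infinite_iff_finite.mp hinf
    exact hnt fun x y =>
      strictMono_eq_id_of_finite (f := fun x => q.op x y) (fun a b hab => h a b y hab) x
  · rintro ⟨_, h⟩
    by_contra hinf
    have : Finite Q := not_infinite_iff_finite.mp hinf
    have hid : ∀ z y : Q, q.op z y = y := fun z =>
      strictMono_eq_id_of_finite (f := fun y => q.op z y) (fun a b hab => h a b z hab)
    apply hnt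
    intro x y
    -- op z y = y for all z, y; then inv y y = x for all x via inv_op, so Q subsingleton
    have hsub : ∀ a b : Q, a = b := by
      intro a b
      have ha : q.inv (q.op a y) y = a := q.inv_op a y
      have hb : q.inv (q.op b y) y = b := q.inv_op b y
      rw [hid a y] at ha
      rw [hid b y] at hb
      rw [← ha, ← hb]
    rw [hsub (q.op x y) x]
end

section
/- There is no linear order < on a quandle Q such that for all x < y and all z: x*z > y*z, x*^{-1}z > y*^{-1}z, z*x > z*y, and z*^{-1}x > z*^{-1}y (i.e., no ordering of type (>, >, >, >) exists), unless Q has at most one element. -/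
/-- No linear order on a quandle with more than one element can be of type
(>, >, >, >). -/
theorem no_order_of_type_gggg {Q : Type*} (q : PaperQuandle Q) [LinearOrder Q]
    (hcard : ∃ x y : Q, x ≠ y)
    (h1 : ∀ x y z : Q, x < y → q.op y z < q.op x z)
    (h2 : ∀ x y z : Q, x < y → q.inv y z < q.inv x z)
    (h3 : ∀ x y z : Q, x < y → q.op z y < q.op z x)
    (h4 : ∀ x y z : Q, x < y → q.inv z y < q.inv z x) :
    False := by
  obtain ⟨a, b, hne⟩ := hcard
  have key : ∀ x y : Q, x < y → False := by
    intro x y hxy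
    have hA := h1 x y y hxy
    rw [q.idem] at hA
    have hB := h3 x y x hxy
    rw [q.idem] at hB
    exact absurd (hA.trans hB) (not_lt.2 hxy.le)
  rcases hne.lt_or_gt with h | h
  · exact key a b h
  · exact key b a h
end

section
/- Let < be a bi-ordering on a quandle Q and x, y ∈ Q distinct. Then either x*^{-1}y < x < x*y < y < y*^{-1}x and x*^{-1}y < x < y*x < y < y*^{-1}x, or all these inequalities hold with < replaced by >. -/
lemma biordering_chain_aux {Q : Type*} (q : PaperQuandle Q) [LinearOrder Q]
    (hro : ∀ x y z : Q, x < y → q.op x z < q.op y z)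
    (hlo : ∀ x y z : Q, x < y → q.op z x < q.op z y)
    (x y : Q) (h : x < y) :
    q.inv x y < x ∧ x < q.op x y ∧ q.op x y < y ∧ y < q.inv y x ∧
      x < q.op y x ∧ q.op y x < y := by
  have hxxy : x < q.op x y := by
    have := hlo x y x h; rwa [q.idem] at this
  have hxyy : q.op x y < y := by
    have := hro x y y h; rwa [q.idem] at this
  have hxyx : x < q.op y x := by
    have := hro x y x h; rwa [q.idem] at this
  have hyxy : q.op y x < y := by
    have := hlo x y y h; rwa [q.idem] at this
  refine ⟨?_, hxxy, hxyy, ?_, hxyx, hyxy⟩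
  · rcases lt_trichotomy (q.inv x y) x with h1 | h1 | h1
    · exact h1
    · have hx := q.op_inv x y
      rw [h1] at hx
      exact absurd hx hxxy.ne'
    · have := hro x (q.inv x y) y h1
      rw [q.op_inv] at this
      exact absurd this (hxxy.asymm)
  · rcases lt_trichotomy y (q.inv y x) with h1 | h1 | h1
    · exact h1
    · have hy : q.op y x = y := by
        have := q.op_inv y x; rwa [← h1] at this
      exact absurd hy hyxy.ne
    · have := hro (q.inv y x) y x h1
      rw [q.op_inv] at this
      exact absurd this (hyxy.asymm)

/-- For a bi-ordering on a quandle and distinct x, y, the chains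
x*⁻¹y ◆ x ◆ x*y ◆ y ◆ y*⁻¹x and x*⁻¹y ◆ x ◆ y*x ◆ y ◆ y*⁻¹x hold for some
◆ ∈ {<, >}. -/
theorem biordering_chains {Q : Type*} (q : PaperQuandle Q) [LinearOrder Q]
    (hro : ∀ x y z : Q, x < y → q.op x z < q.op y z)
    (hlo : ∀ x y z : Q, x < y → q.op z x < q.op z y)
    (x y : Q) (hxy : x ≠ y) :
    (q.inv x y < x ∧ x < q.op x y ∧ q.op x y < y ∧ y < q.inv y x ∧
      x < q.op y x ∧ q.op y x < y) ∨
    (q.inv x y > x ∧ x > q.op x y ∧ q.op x y > y ∧ y > q.inv y x ∧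
      x > q.op y x ∧ q.op y x > y) := by
  rcases hxy.lt_or_gt with h | h
  · exact Or.inl (biordering_chain_aux q hro hlo x y h)
  · obtain ⟨a, b, c, d, e, f⟩ := biordering_chain_aux q hro hlo y x h
    exact Or.inr ⟨d, f, e, a, c, b⟩
end

section
/- Every quasi-commutative bi-orderable quandle is commutative. -/
/-- Every quasi-commutative bi-orderable quandle is commutative. -/
theorem quasiComm_biorderable_comm {Q : Type*} (q : PaperQuandle Q)
    (hqc : ∀ x y : Q, q.op x y = q.op y x ∨ q.op x y = q.inv y x ∨
      q.inv x y = q.op y x ∨ q.inv x y = q.inv y x)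
    (hbo : ∃ _ : LinearOrder Q, (∀ x y z : Q, x < y → q.op x z < q.op y z) ∧
      (∀ x y z : Q, x < y → q.op z x < q.op z y)) :
    ∀ x y : Q, q.op x y = q.op y x := by
  obtain ⟨lo, h1, h2⟩ := hbo
  have mono_le : ∀ a b z : Q, a ≤ b → q.op a z ≤ q.op b z := by
    intro a b z hab
    rcases eq_or_lt_of_le hab with h | h
    · rw [h]
    · exact (h1 a b z h).le
  have key : ∀ x y : Q, x < y → q.op x y = q.op y x := by
    intro x y hlt
    have hx_lt_xy : x < q.op x y := by
      have := h2 x y x hlt; rwa [q.idem] at this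
    have hxy_lt_y : q.op x y < y := by
      have := h1 x y y hlt; rwa [q.idem] at this
    have hx_lt_yx : x < q.op y x := by
      have := h1 x y x hlt; rwa [q.idem] at this
    have hyx_lt_y : q.op y x < y := by
      have := h2 x y y hlt; rwa [q.idem] at this
    -- inv y x > y
    have hinv_yx : y < q.inv y x := by
      by_contra hle
      push_neg at hle
      have : q.op (q.inv y x) x ≤ q.op y x := mono_le _ _ x hle
      rw [q.op_inv] at this
      exact absurd (lt_of_le_of_lt this hyx_lt_y) (lt_irrefl y)
    -- inv x y < x
    have hinv_xy : q.inv x y < x := by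
      by_contra hle
      push_neg at hle
      have : q.op x y ≤ q.op (q.inv x y) y := mono_le _ _ y hle
      rw [q.op_inv] at this
      exact absurd (lt_of_lt_of_le hx_lt_xy this) (lt_irrefl x)
    rcases hqc x y with h | h | h | h
    · exact h
    · exact absurd h (ne_of_lt (hxy_lt_y.trans hinv_yx))
    · exact absurd h (ne_of_lt (hinv_xy.trans hx_lt_yx))
    · exact absurd h (ne_of_lt (hinv_xy.trans (lt_trans (hx_lt_xy.trans hxy_lt_y) hinv_yx)))
  intro x y
  rcases lt_trichotomy x y with h | h | h
  · exact key x y h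
  · rw [h]
  · exact (key y x h).symm
end

section
/- The product of a family of right-orderable quandles (with componentwise operation) is a right-orderable quandle; similarly for left-orderable and bi-orderable quandles. -/
/-- Auxiliary: a lexicographic linear order on a product, with an explicit
description of its strict order as `Pi.Lex` over the well-ordering relation. -/
theorem exists_lex_order {ι : Type*} {Q : ι → Type*} (lo : ∀ i, LinearOrder (Q i)) :
    ∃ L : LinearOrder (∀ i, Q i), ∀ x y : ∀ i, Q i,
      L.lt x y ↔ ∃ i, (∀ j, WellOrderingRel j i → x j = y j) ∧ (lo i).lt (x i) (y i) := by
  letI : LinearOrder ι := IsWellOrder.linearOrder WellOrderingRel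
  haveI : WellFoundedLT ι := ⟨(WellOrderingRel.isWellOrder).wf⟩
  refine ⟨(inferInstance : LinearOrder (Lex (∀ i, Q i))), fun x y => Iff.rfl⟩

theorem lex_lt_of_strictMono {ι : Type*} {Q : ι → Type*} (lo : ∀ i, LinearOrder (Q i))
    (f : ∀ i, Q i → Q i) (hf : ∀ i a b, (lo i).lt a b → (lo i).lt (f i a) (f i b))
    {x y : ∀ i, Q i}
    (h : ∃ i, (∀ j, WellOrderingRel j i → x j = y j) ∧ (lo i).lt (x i) (y i)) :
    ∃ i, (∀ j, WellOrderingRel j i → f j (x j) = f j (y j)) ∧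
      (lo i).lt (f i (x i)) (f i (y i)) := by
  obtain ⟨i, hj, hi⟩ := h
  exact ⟨i, fun j hji => congrArg (f j) (hj j hji), hf i _ _ hi⟩

/-- The product of a family of right-orderable (resp. left-orderable,
bi-orderable) quandles, with componentwise operation, is right-orderable
(resp. left-orderable, bi-orderable). -/
theorem product_orderable {ι : Type*} {Q : ι → Type*} (q : ∀ i, PaperQuandle (Q i)) :
    ((∀ i, ∃ _ : LinearOrder (Q i), ∀ x y z : Q i, x < y → (q i).op x z < (q i).op y z) →
      ∃ _ : LinearOrder (∀ i, Q i), ∀ x y z : ∀ i, Q i, x < y →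
        (fun i => (q i).op (x i) (z i)) < (fun i => (q i).op (y i) (z i))) ∧
    ((∀ i, ∃ _ : LinearOrder (Q i), ∀ x y z : Q i, x < y → (q i).op z x < (q i).op z y) →
      ∃ _ : LinearOrder (∀ i, Q i), ∀ x y z : ∀ i, Q i, x < y →
        (fun i => (q i).op (z i) (x i)) < (fun i => (q i).op (z i) (y i))) ∧
    ((∀ i, ∃ _ : LinearOrder (Q i), (∀ x y z : Q i, x < y → (q i).op x z < (q i).op y z) ∧
        (∀ x y z : Q i, x < y → (q i).op z x < (q i).op z y)) →
      ∃ _ : LinearOrder (∀ i, Q i), (∀ x y z : ∀ i, Q i, x < y →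
          (fun i => (q i).op (x i) (z i)) < (fun i => (q i).op (y i) (z i))) ∧
        (∀ x y z : ∀ i, Q i, x < y →
          (fun i => (q i).op (z i) (x i)) < (fun i => (q i).op (z i) (y i)))) := by
  refine ⟨fun h => ?_, fun h => ?_, fun h => ?_⟩
  · choose lo hlo using h
    obtain ⟨L, hL⟩ := exists_lex_order lo
    refine ⟨L, fun x y z hxy => ?_⟩
    exact (hL _ _).2 (lex_lt_of_strictMono lo (fun i a => (q i).op a (z i))
      (fun i a b hab => hlo i a b (z i) hab) ((hL _ _).1 hxy))
  · choose lo hlo using h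
    obtain ⟨L, hL⟩ := exists_lex_order lo
    refine ⟨L, fun x y z hxy => ?_⟩
    exact (hL _ _).2 (lex_lt_of_strictMono lo (fun i a => (q i).op (z i) a)
      (fun i a b hab => hlo i a b (z i) hab) ((hL _ _).1 hxy))
  · choose lo hlo using h
    obtain ⟨L, hL⟩ := exists_lex_order lo
    refine ⟨L, fun x y z hxy => ?_, fun x y z hxy => ?_⟩
    · exact (hL _ _).2 (lex_lt_of_strictMono lo (fun i a => (q i).op a (z i))
        (fun i a b hab => (hlo i).1 a b (z i) hab) ((hL _ _).1 hxy))
    · exact (hL _ _).2 (lex_lt_of_strictMono lo (fun i a => (q i).op (z i) a)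
        (fun i a b hab => (hlo i).2 a b (z i) hab) ((hL _ _).1 hxy))
end

section
/- If G is a bi-orderable group and A ⊆ G, then the (G,A)-quandle Q(G,A) is right-orderable, where Q(G,A) is the quotient of A × G by the relation (a, vu) ~ (a, u) for v ∈ C_G(a), with operation [(a,u)]*[(b,v)] = [(a, u v^{-1} b v)]. -/
/-- The defining relation of the `(G,A)`-quandle `Q(G,A)`: `(a, vu) ~ (a, u)`
whenever `v` centralizes `a`; equivalently, the first components agree and the
second components differ by left multiplication by an element of `C_G(a)`. -/
def GAQuandleRel {G : Type*} [Group G] (A : Set G) (p q : A × G) : Prop :=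
  p.1 = q.1 ∧ p.2 * q.2⁻¹ ∈ Subgroup.centralizer ({(p.1 : G)} : Set G)

/-- If `G` is a bi-orderable group and `A ⊆ G`, then the `(G,A)`-quandle
`Q(G,A)` (the quotient of `A × G` by the above relation, with operation
`[(a,u)]*[(b,v)] = [(a, u v⁻¹ b v)]`) is right-orderable. -/
theorem GA_quandle_rightOrderable {G : Type*} [Group G] [LinearOrder G]
    (hl : ∀ a b c : G, a < b → c * a < c * b)
    (hr : ∀ a b c : G, a < b → a * c < b * c) (A : Set G)
    (star : Quot (GAQuandleRel A) → Quot (GAQuandleRel A) → Quot (GAQuandleRel A))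
    (hstar : ∀ p q : A × G, star (Quot.mk _ p) (Quot.mk _ q) =
      Quot.mk _ (p.1, p.2 * q.2⁻¹ * (q.1 : G) * q.2)) :
    ∃ _ : LinearOrder (Quot (GAQuandleRel A)),
      ∀ x y z : Quot (GAQuandleRel A), x < y → star x z < star y z := by
  classical
  have conj : ∀ w x y : G, x < y → w⁻¹ * x * w < w⁻¹ * y * w :=
    fun w x y h => hr _ _ _ (hl _ _ _ h)
  have wd : ∀ p q : A × G, GAQuandleRel A p q →
      (toLex (p.1, p.2⁻¹ * (p.1 : G) * p.2) : Lex (↥A × G)) =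
        toLex (q.1, q.2⁻¹ * (q.1 : G) * q.2) := by
    rintro ⟨a, u⟩ ⟨b, v⟩ ⟨h1, h2⟩
    simp only at h1
    subst h1
    have hc : (a : G) * (u * v⁻¹) = (u * v⁻¹) * a :=
      (Subgroup.mem_centralizer_iff.mp h2) _ (Set.mem_singleton _)
    have h : (a : G) * u = u * v⁻¹ * a * v := by
      calc (a : G) * u = a * (u * v⁻¹) * v := by group
        _ = (u * v⁻¹) * a * v := by rw [hc]
    have key : u⁻¹ * (a : G) * u = v⁻¹ * a * v := by
      calc u⁻¹ * (a : G) * u = u⁻¹ * ((a : G) * u) := by group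
        _ = u⁻¹ * (u * v⁻¹ * a * v) := by rw [h]
        _ = v⁻¹ * a * v := by group
    simp only [key]
  set f : Quot (GAQuandleRel A) → Lex (↥A × G) :=
    Quot.lift (fun p : A × G => toLex (p.1, p.2⁻¹ * (p.1 : G) * p.2)) wd with hf
  have finj : Function.Injective f := by
    intro x y
    induction x using Quot.ind with | _ p =>
    induction y using Quot.ind with | _ q =>
    obtain ⟨a, u⟩ := p
    obtain ⟨b, v⟩ := q
    intro h
    have h' : ((a, u⁻¹ * (a : G) * u) : ↥A × G) = (b, v⁻¹ * (b : G) * v) :=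
      toLex.injective h
    have h1 : a = b := congrArg Prod.fst h'
    subst h1
    have h2 : u⁻¹ * (a : G) * u = v⁻¹ * (a : G) * v := congrArg Prod.snd h'
    apply Quot.sound
    refine ⟨rfl, Subgroup.mem_centralizer_iff.mpr ?_⟩
    rintro g hg
    rw [Set.mem_singleton_iff] at hg
    subst hg
    show (a : G) * (u * v⁻¹) = (u * v⁻¹) * a
    calc (a : G) * (u * v⁻¹) = u * (u⁻¹ * a * u) * v⁻¹ := by group
      _ = u * (v⁻¹ * a * v) * v⁻¹ := by rw [h2]
      _ = (u * v⁻¹) * a := by group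
  refine ⟨LinearOrder.lift' f finj, ?_⟩
  intro x y z hxy
  replace hxy : f x < f y := hxy
  show f (star x z) < f (star y z)
  induction x using Quot.ind with | _ p =>
  induction y using Quot.ind with | _ q =>
  induction z using Quot.ind with | _ r =>
  obtain ⟨a, u⟩ := p
  obtain ⟨b, v⟩ := q
  obtain ⟨c, w⟩ := r
  rw [hstar, hstar]
  have hfx : f (Quot.mk _ ((a, u) : A × G)) = toLex (a, u⁻¹ * (a : G) * u) := rfl
  have hfy : f (Quot.mk _ ((b, v) : A × G)) = toLex (b, v⁻¹ * (b : G) * v) := rfl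
  rw [hfx, hfy, Prod.Lex.lt_iff] at hxy
  show (toLex ((a, (u * w⁻¹ * (c : G) * w)⁻¹ * (a : G) * (u * w⁻¹ * (c : G) * w)) : ↥A × G)) <
    toLex (b, (v * w⁻¹ * (c : G) * w)⁻¹ * (b : G) * (v * w⁻¹ * (c : G) * w))
  rw [Prod.Lex.lt_iff]
  rcases hxy with h | ⟨h1, h2⟩
  · exact Or.inl h
  · refine Or.inr ⟨h1, ?_⟩
    set t : G := w⁻¹ * (c : G) * w with ht
    have e1 : (u * w⁻¹ * (c : G) * w)⁻¹ * (a : G) * (u * w⁻¹ * (c : G) * w)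
        = t⁻¹ * (u⁻¹ * (a : G) * u) * t := by rw [ht]; group
    have e2 : (v * w⁻¹ * (c : G) * w)⁻¹ * (b : G) * (v * w⁻¹ * (c : G) * w)
        = t⁻¹ * (v⁻¹ * (b : G) * v) * t := by rw [ht]; group
    rw [e1, e2]
    exact conj t _ _ h2
end

section
/- Free quandles are right-orderable. -/
/-- The defining relation of the free quandle `FQ(A) = Q(F(A), A)` on a set `A`:
`(a, vu) ~ (a, u)` whenever `v` centralizes `a` in the free group `F(A)`. -/
def FreeQuandleRel (A : Type*) (p q : A × FreeGroup A) : Prop :=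
  p.1 = q.1 ∧ p.2 * q.2⁻¹ ∈ Subgroup.centralizer ({FreeGroup.of p.1} : Set (FreeGroup A))
namespace MagnusAux
variable {A : Type*}

/-- Noncommutative "power series" on words over `A` with integer coefficients. -/
def Mag (A : Type*) := List A → ℤ

namespace Mag

open Classical in
noncomputable instance : One (Mag A) := ⟨fun w => if w = [] then 1 else 0⟩

instance : Mul (Mag A) :=
  ⟨fun f g w => ∑ i ∈ Finset.range (w.length + 1), f (w.take i) * g (w.drop i)⟩

theorem mul_apply (f g : Mag A) (w : List A) :
    (f * g) w = ∑ i ∈ Finset.range (w.length + 1), f (w.take i) * g (w.drop i) := rfl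

open Classical in
theorem one_apply (w : List A) : (1 : Mag A) w = if w = [] then 1 else 0 := by
  change (if w = [] then (1:ℤ) else 0) = _
  congr

theorem one_nil : (1 : Mag A) [] = 1 := by rw [one_apply, if_pos rfl]

theorem one_ne_nil {w : List A} (h : w ≠ []) : (1 : Mag A) w = 0 := by
  rw [one_apply, if_neg h]

theorem mul_nil (f g : Mag A) : (f * g) [] = f [] * g [] := by
  simp [mul_apply]

/-- Shift: `sh x f u = f (x :: u)`. -/
def sh (x : A) (f : Mag A) : Mag A := fun u => f (x :: u)

theorem mul_cons (f g : Mag A) (x : A) (w : List A) :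
    (f * g) (x :: w) = f [] * g (x :: w) + (sh x f * g) w := by
  rw [mul_apply]
  have h : (x :: w).length + 1 = w.length + 1 + 1 := by simp
  rw [h, Finset.sum_range_succ']
  simp only [List.take_succ_cons, List.drop_succ_cons, List.take_zero, List.drop_zero]
  rw [add_comm]
  rfl

theorem mul_single (f g : Mag A) (x : A) :
    (f * g) [x] = f [] * g [x] + f [x] * g [] := by
  rw [mul_cons, mul_nil]; rfl

theorem zeroFun_mul (f : Mag A) : (show Mag A from fun _ => 0) * f = (show Mag A from fun _ => 0) := by
  funext w; rw [mul_apply]; simp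

theorem addFun_mul (g₁ g₂ h : Mag A) :
    (show Mag A from fun w => g₁ w + g₂ w) * h = fun w => (g₁ * h) w + (g₂ * h) w := by
  funext w; erw [mul_apply]; simp only [mul_apply, ← Finset.sum_add_distrib, add_mul]

theorem smulFun_mul (z : ℤ) (g h : Mag A) :
    (show Mag A from fun w => z * g w) * h = fun w => z * (g * h) w := by
  funext w; erw [mul_apply]; simp only [mul_apply, Finset.mul_sum, mul_assoc]

theorem sh_mul (x : A) (f g : Mag A) :
    sh x (f * g) = fun u => f [] * sh x g u + (sh x f * g) u := by
  funext u; exact mul_cons f g x u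

theorem mul_assoc' (f g h : Mag A) : f * g * h = f * (g * h) := by
  funext w
  induction w generalizing f g with
  | nil => rw [mul_nil, mul_nil, mul_nil, mul_nil, mul_assoc]
  | cons x w ih =>
      rw [mul_cons, mul_cons, sh_mul, mul_nil]
      have h2 : (show Mag A from fun u => f [] * sh x g u + (sh x f * g) u) * h
          = fun u => f [] * (sh x g * h) u + (sh x f * g * h) u := by
        rw [addFun_mul (show Mag A from fun u => f [] * sh x g u) (sh x f * g) h, smulFun_mul]
      rw [h2]
      show _ * _ * h (x :: w) + (f [] * (sh x g * h) w + (sh x f * g * h) w) = _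
      rw [ih (sh x f) g]
      rw [mul_cons g h x w]
      ring

theorem one_mul' (f : Mag A) : 1 * f = f := by
  funext w
  cases w with
  | nil => rw [mul_nil, one_nil, one_mul]
  | cons x w =>
      rw [mul_cons]
      have h1 : sh x (1 : Mag A) = (show Mag A from fun _ => 0) := by
        funext u; exact one_ne_nil (by simp)
      rw [h1, zeroFun_mul, one_nil]
      show 1 * f (x :: w) + 0 = f (x :: w)
      ring

theorem mul_one' (f : Mag A) : f * 1 = f := by
  funext w
  rw [mul_apply]
  rw [Finset.sum_eq_single w.length]
  · rw [List.take_length, List.drop_length, one_nil, mul_one]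
  · intro i hi hne
    have hi' : i < w.length := by
      have := Finset.mem_range.mp hi
      omega
    have hd : w.drop i ≠ [] := by
      simp [List.drop_eq_nil_iff]; omega
    rw [one_ne_nil hd, mul_zero]
  · intro h
    exact absurd (Finset.self_mem_range_succ w.length) h

noncomputable instance : Monoid (Mag A) where
  mul_assoc := mul_assoc'
  one_mul := one_mul'
  mul_one := mul_one'


/-- Supports: closure of letter-supported functions under convolution. -/
theorem mul_supp {S : A → Prop} {f g : Mag A}
    (hf : ∀ w, f w ≠ 0 → ∀ x ∈ w, S x) (hg : ∀ w, g w ≠ 0 → ∀ x ∈ w, S x) :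
    ∀ w, (f * g) w ≠ 0 → ∀ x ∈ w, S x := by
  intro w hw x hx
  obtain ⟨i, hi, hterm⟩ := Finset.exists_ne_zero_of_sum_ne_zero hw
  have h1 : f (w.take i) ≠ 0 := fun h => hterm (by rw [h, zero_mul])
  have h2 : g (w.drop i) ≠ 0 := fun h => hterm (by rw [h, mul_zero])
  rcases (List.mem_append.mp (by rw [List.take_append_drop]; exact hx :
      x ∈ w.take i ++ w.drop i)) with h | h
  · exact hf _ h1 x h
  · exact hg _ h2 x h

open Classical in
/-- `1 + X_a`. -/
noncomputable def onePlus (a : A) : Mag A := fun w => if w = [] ∨ w = [a] then 1 else 0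

open Classical in
/-- `(1 + X_a)⁻¹ = 1 - X_a + X_a² - ⋯`. -/
noncomputable def invS (a : A) : Mag A :=
  fun w => if ∀ x ∈ w, x = a then (-1) ^ w.length else 0

theorem onePlus_supp (a : A) : ∀ w, onePlus a w ≠ 0 → ∀ x ∈ w, x = a := by
  intro w hw x hx
  unfold onePlus at hw
  by_cases h : w = [] ∨ w = [a]
  · rcases h with h | h <;> subst h
    · simp at hx
    · simpa using hx
  · rw [if_neg h] at hw; exact absurd rfl hw

theorem invS_supp (a : A) : ∀ w, invS a w ≠ 0 → ∀ x ∈ w, x = a := by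
  intro w hw x hx
  unfold invS at hw
  by_cases h : ∀ x ∈ w, x = a
  · exact h x hx
  · rw [if_neg h] at hw; exact absurd rfl hw

theorem onePlus_nil (a : A) : onePlus a [] = 1 := by simp [onePlus]
theorem onePlus_single (a : A) : onePlus a [a] = 1 := by simp [onePlus]
theorem invS_nil (a : A) : invS a [] = 1 := by simp [invS]
theorem invS_single (a : A) : invS a [a] = -1 := by simp [invS]

theorem onePlus_mul_invS (a : A) : onePlus a * invS a = 1 := by
  funext w
  cases w with
  | nil => rw [mul_nil, onePlus_nil, invS_nil, one_nil]; ring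
  | cons x w =>
      rw [mul_cons, onePlus_nil, one_mul, one_ne_nil (by simp : (x :: w : List A) ≠ [])]
      by_cases hx : x = a
      · subst hx
        have hsh : sh x (onePlus x) = (1 : Mag A) := by
          funext u
          cases u with
          | nil => rw [one_nil]; exact onePlus_single x
          | cons y u =>
              rw [one_ne_nil (by simp : (y :: u : List A) ≠ [])]
              simp [sh, onePlus]
        rw [hsh, one_mul']
        by_cases hw : ∀ y ∈ w, y = x
        · have hall : ∀ y ∈ x :: w, y = x := by
            intro y hy
            rcases List.mem_cons.mp hy with h | h
            · exact h
            · exact hw y h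
          have h1 : invS x (x :: w) = (-1) ^ (w.length + 1) := by
            simp only [invS]
            rw [if_pos hall, List.length_cons]
          have h2 : invS x w = (-1) ^ w.length := by simp only [invS]; rw [if_pos hw]
          rw [h1, h2, pow_succ]; ring
        · have h1 : invS x (x :: w) = 0 := by
            simp only [invS]
            rw [if_neg (fun h => hw (fun y hy => h y (List.mem_cons_of_mem _ hy)))]
          have h2 : invS x w = 0 := by simp only [invS]; rw [if_neg hw]
          rw [h1, h2]; ring
      · have h1 : invS a (x :: w) = 0 := by
          simp only [invS]
          rw [if_neg (fun h => hx (h x (List.mem_cons_self)))]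
        have hsh : sh x (onePlus a) = (show Mag A from fun _ => 0) := by
          funext u
          simp only [sh, onePlus]
          rw [if_neg]
          push_neg
          exact ⟨by simp, by simp [hx]⟩
        rw [h1, hsh, zeroFun_mul]
        show (0:ℤ) + 0 = 0
        ring

/-- Functions supported on powers of a single letter commute. -/
theorem mul_comm_of_supp {a : A} {f g : Mag A}
    (hf : ∀ w, f w ≠ 0 → ∀ x ∈ w, x = a) (hg : ∀ w, g w ≠ 0 → ∀ x ∈ w, x = a) :
    f * g = g * f := by
  funext w
  by_cases hw : ∀ x ∈ w, x = a
  · have hrep : w = List.replicate w.length a := List.eq_replicate_of_mem hw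
    set n := w.length with hn
    rw [mul_apply, mul_apply]
    have hlen : (List.replicate n a : List A).length = n := List.length_replicate
    calc ∑ i ∈ Finset.range (w.length + 1), f (w.take i) * g (w.drop i)
        = ∑ i ∈ Finset.range (n + 1), f (List.replicate i a) * g (List.replicate (n - i) a) := by
          rw [← hn]
          refine Finset.sum_congr rfl fun i hi => ?_
          have hi' : i ≤ n := by have := Finset.mem_range.mp hi; omega
          rw [hrep]
          simp [List.take_replicate, List.drop_replicate, min_eq_left hi']
      _ = ∑ i ∈ Finset.range (n + 1), g (List.replicate i a) * f (List.replicate (n - i) a) := by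
          rw [← Finset.sum_range_reflect (fun i => g (List.replicate i a) * f (List.replicate (n - i) a)) (n+1)]
          refine Finset.sum_congr rfl fun i hi => ?_
          have hi' : i ≤ n := by have := Finset.mem_range.mp hi; omega
          have h1 : n + 1 - 1 - i = n - i := by omega
          have h2 : n - (n - i) = i := by omega
          rw [h1, h2, mul_comm]
      _ = ∑ i ∈ Finset.range (w.length + 1), g (w.take i) * f (w.drop i) := by
          rw [← hn]
          refine (Finset.sum_congr rfl fun i hi => ?_).symm
          have hi' : i ≤ n := by have := Finset.mem_range.mp hi; omega
          rw [hrep]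
          simp [List.take_replicate, List.drop_replicate, min_eq_left hi']
  · push_neg at hw
    obtain ⟨x, hxw, hxa⟩ := hw
    rw [mul_apply, mul_apply]
    have key : ∀ (u v : Mag A), (∀ w', u w' ≠ 0 → ∀ y ∈ w', y = a) →
        (∀ w', v w' ≠ 0 → ∀ y ∈ w', y = a) →
        ∀ i ∈ Finset.range (w.length + 1), u (w.take i) * v (w.drop i) = 0 := by
      intro u v hu hv i _
      rcases (List.mem_append.mp (by rw [List.take_append_drop]; exact hxw :
          x ∈ w.take i ++ w.drop i)) with h | h
      · by_cases h0 : u (w.take i) = 0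
        · rw [h0, zero_mul]
        · exact absurd (hu _ h0 x h) hxa
      · by_cases h0 : v (w.drop i) = 0
        · rw [h0, mul_zero]
        · exact absurd (hv _ h0 x h) hxa
    rw [Finset.sum_eq_zero (key f g hf hg), Finset.sum_eq_zero (key g f hg hf)]

theorem invS_mul_onePlus (a : A) : invS a * onePlus a = 1 := by
  rw [mul_comm_of_supp (invS_supp a) (onePlus_supp a)]
  exact onePlus_mul_invS a

/-- The Magnus unit `1 + X_a`. -/
noncomputable def U (a : A) : (Mag A)ˣ :=
  ⟨onePlus a, invS a, onePlus_mul_invS a, invS_mul_onePlus a⟩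

/-- Constant term as a monoid hom. -/
noncomputable def eps : Mag A →* ℤ where
  toFun f := f []
  map_one' := one_nil
  map_mul' f g := mul_nil f g

end Mag

open Mag

/-- The Magnus morphism. -/
noncomputable def mu : FreeGroup A →* (Mag A)ˣ := FreeGroup.lift (fun a => U a)

theorem mu_of (a : A) : mu (FreeGroup.of a) = U a := FreeGroup.lift_apply_of

theorem mu_nil (g : FreeGroup A) : (mu g : Mag A) [] = 1 := by
  have h : (Units.map (eps : Mag A →* ℤ)).comp (mu (A := A)) = 1 := by
    apply FreeGroup.ext_hom
    intro a
    ext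
    rw [MonoidHom.comp_apply, mu_of]
    show eps ((U a : Mag A)) = ((1 : FreeGroup A →* ℤˣ) (FreeGroup.of a) : ℤ)
    simp only [MonoidHom.one_apply, Units.val_one]
    exact onePlus_nil a
  have h3 : (Units.map (eps : Mag A →* ℤ)) (mu g) = 1 := by
    have := DFunLike.congr_fun h g
    simpa using this
  have h4 := congrArg Units.val h3
  exact h4

theorem U_zpow_nil (a : A) (e : ℤ) : ((U a ^ e : (Mag A)ˣ) : Mag A) [] = 1 := by
  rw [← mu_of, ← map_zpow]
  exact mu_nil _

theorem U_inv_val (a : A) : (((U a)⁻¹ : (Mag A)ˣ) : Mag A) = invS a := rfl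

theorem U_zpow_single (a : A) (e : ℤ) : ((U a ^ e : (Mag A)ˣ) : Mag A) [a] = e := by
  induction e using Int.induction_on with
  | zero => rw [zpow_zero]; exact one_ne_nil (by simp)
  | succ n ih =>
      rw [zpow_add_one, Units.val_mul, mul_single, ih, U_zpow_nil]
      show 1 * onePlus a [a] + _ * onePlus a [] = _
      rw [onePlus_single, onePlus_nil]
      push_cast; ring
  | pred n ih =>
      rw [zpow_sub_one, Units.val_mul, mul_single, ih, U_zpow_nil, U_inv_val,
        invS_single, invS_nil]
      push_cast; ring

theorem U_zpow_supp (a : A) (e : ℤ) :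
    ∀ w, ((U a ^ e : (Mag A)ˣ) : Mag A) w ≠ 0 → ∀ x ∈ w, x = a := by
  induction e using Int.induction_on with
  | zero =>
      intro w hw x hx
      rw [zpow_zero] at hw
      have : w = [] := by
        by_contra h
        exact hw (one_ne_nil h)
      subst this; simp at hx
  | succ n ih =>
      rw [zpow_add_one]
      intro w
      rw [Units.val_mul]
      exact mul_supp ih (onePlus_supp a) w
  | pred n ih =>
      rw [zpow_sub_one]
      intro w
      rw [Units.val_mul, U_inv_val]
      exact mul_supp ih (invS_supp a) w


section Letters
variable [DecidableEq A]

theorem prod_supp {S : A → Prop} :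
    ∀ l : List (Mag A), (∀ f ∈ l, ∀ w, f w ≠ 0 → ∀ x ∈ w, S x) →
      ∀ w, l.prod w ≠ 0 → ∀ x ∈ w, S x := by
  intro l
  induction l with
  | nil =>
      intro _ w hw x hx
      rw [List.prod_nil] at hw
      have : w = [] := by
        by_contra h
        exact hw (Mag.one_ne_nil h)
      subst this; simp at hx
  | cons f l ih =>
      intro hl w hw
      rw [List.prod_cons] at hw
      exact Mag.mul_supp (hl f (List.mem_cons_self))
        (ih (fun f' hf' => hl f' (List.mem_cons_of_mem _ hf'))) w hw

theorem mu_mk_val (L : List (A × Bool)) :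
    (mu (FreeGroup.mk L) : Mag A)
      = ((L.map fun p => cond p.2 (U p.1) (U p.1)⁻¹).map Units.val).prod := by
  have h1 : mu (FreeGroup.mk L) = (L.map fun p => cond p.2 (U p.1) (U p.1)⁻¹).prod :=
    FreeGroup.lift_mk
  rw [h1]
  exact map_list_prod (Units.coeHom (Mag A)) _

theorem mu_supp {S : A → Prop} (g : FreeGroup A) (hg : ∀ p ∈ g.toWord, S p.1) :
    ∀ w, (mu g : Mag A) w ≠ 0 → ∀ x ∈ w, S x := by
  have h := mu_mk_val (A := A) g.toWord
  rw [FreeGroup.mk_toWord] at h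
  rw [h]
  apply prod_supp
  intro f hf
  obtain ⟨u, hu, rfl⟩ := List.mem_map.mp hf
  obtain ⟨p, hp, rfl⟩ := List.mem_map.mp hu
  have hS : S p.1 := hg p hp
  intro w hw x hx
  cases hb : p.2 with
  | true =>
      rw [hb] at hw
      simp only [Bool.cond_true] at hw
      have := onePlus_supp p.1 w hw x hx
      rwa [this]
  | false =>
      rw [hb] at hw
      simp only [Bool.cond_false] at hw
      rw [U_inv_val] at hw
      have := invS_supp p.1 w hw x hx
      rwa [this]

end Letters

/-- The "reducedness" relation: adjacent letters are not inverse to each other. -/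
def RR : (A × Bool) → (A × Bool) → Prop := fun p q => p.1 ≠ q.1 ∨ p.2 = q.2

theorem chain'_of_noInfix :
    ∀ L : List (A × Bool),
      (∀ (L₁ L₂ : List (A × Bool)) (x : A) (b : Bool), L ≠ L₁ ++ (x, b) :: (x, !b) :: L₂) →
      List.Chain' RR L := by
  intro L
  induction L with
  | nil => intro _; exact List.isChain_nil
  | cons p T ih =>
      intro h
      cases T with
      | nil => exact List.isChain_singleton p
      | cons q T' =>
          rw [List.Chain', List.isChain_cons_cons]
          constructor
          · by_contra hR
            rw [RR] at hR
            push_neg at hR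
            obtain ⟨h1, h2⟩ := hR
            have hq : q = (p.1, !p.2) := by
              ext
              · exact h1.symm
              · simp only []
                cases hb : p.2 <;> cases hb' : q.2 <;> simp_all
            exact h [] T' p.1 p.2 (by rw [← hq]; rfl)
          · apply ih
            intro L₁ L₂ x b hEq
            exact h (p :: L₁) L₂ x b (by rw [hEq]; rfl)

theorem chain'_toWord [DecidableEq A] (g : FreeGroup A) : List.Chain' RR g.toWord := by
  apply chain'_of_noInfix
  intro L₁ L₂ x b hEq
  exact FreeGroup.reduce.not (L₁ := g.toWord) (by rw [FreeGroup.reduce_toWord]; exact hEq)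

section DD
variable [DecidableEq A]

/-- Remove adjacent duplicates. -/
def dd (l : List A) : List A := l.destutter (· ≠ ·)

theorem dd_nil : dd ([] : List A) = [] := rfl

theorem dd_singleton (a : A) : dd [a] = [a] := List.destutter_singleton _

theorem destutter'_head : ∀ (l : List A) (a : A), ∃ t, l.destutter' (· ≠ ·) a = a :: t := by
  intro l
  induction l with
  | nil => intro a; exact ⟨[], by rw [List.destutter'_nil]⟩
  | cons b l ih =>
      intro a
      by_cases h : a ≠ b
      · exact ⟨l.destutter' (· ≠ ·) b, List.destutter'_cons_pos _ h⟩
      · rw [List.destutter'_cons_neg _ h]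
        exact ih a

theorem dd_head_cons (y : A) (t : List A) : ∃ r, dd (y :: t) = y :: r := by
  rw [dd, List.destutter_cons']
  exact destutter'_head t y

theorem dd_cons_cons_same (a : A) (t : List A) : dd (a :: a :: t) = dd (a :: t) := by
  unfold dd
  rw [List.destutter_cons_cons, if_neg (by simp), List.destutter_cons']

theorem dd_cons_ne {a y : A} (t : List A) (h : y ≠ a) :
    dd (a :: y :: t) = a :: dd (y :: t) := by
  unfold dd
  rw [List.destutter_cons_cons, if_pos (Ne.symm h), List.destutter_cons']

theorem dd_cons_of_head_ne {a : A} {q : List A} (h : ∀ y ∈ q.head?, y ≠ a) :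
    dd (a :: q) = a :: dd q := by
  cases q with
  | nil => exact dd_singleton a
  | cons y t => exact dd_cons_ne t (h y rfl)

theorem dd_rep (a : A) (q : List A) :
    ∀ c : ℕ, dd (List.replicate (c + 1) a ++ q) = dd (a :: q) := by
  intro c
  induction c with
  | zero => rfl
  | succ c ih =>
      have : List.replicate (c + 2) a ++ q = a :: a :: (List.replicate c a ++ q) := by
        simp [List.replicate_succ]
      rw [this, dd_cons_cons_same]
      exact ih

theorem dd_chain' (l : List A) : List.Chain' (· ≠ ·) (dd l) := List.isChain_destutter _ _

theorem dd_of_chain' {l : List A} (h : List.Chain' (· ≠ ·) l) : dd l = l :=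
  (List.destutter_eq_self_iff _ _).2 h

theorem dd_sublist (l : List A) : List.Sublist (dd l) l := List.destutter_sublist _ _

end DD

section Key
variable [DecidableEq A]

theorem key : ∀ (n : ℕ) (L : List (A × Bool)), L.length ≤ n → List.Chain' RR L →
    (∀ w, (mu (FreeGroup.mk L) : Mag A) w ≠ 0 →
        List.Sublist (dd w) (dd (L.map Prod.fst))) ∧
      (mu (FreeGroup.mk L) : Mag A) (dd (L.map Prod.fst)) ≠ 0 := by
  intro n
  induction n with
  | zero =>
      intro L hL _
      have : L = [] := List.length_eq_zero_iff.mp (Nat.le_zero.mp hL)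
      subst this
      have h1 : (mu (FreeGroup.mk ([] : List (A × Bool))) : Mag A) = (1 : Mag A) := by
        rw [← FreeGroup.one_eq_mk, map_one, Units.val_one]
      rw [h1]
      constructor
      · intro w hw
        have : w = [] := by
          by_contra h
          exact hw (Mag.one_ne_nil h)
        subst this
        exact List.Sublist.refl _
      · show (1 : Mag A) [] ≠ 0
        rw [Mag.one_nil]; norm_num
  | succ m ihn =>
      intro L hL hRd
      cases hLc : L with
      | nil =>
          subst hLc
          exact ihn [] (Nat.zero_le m) hRd
      | cons hd T =>
          obtain ⟨a, b⟩ := hd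
          subst hLc
          -- block decomposition
          set pP : A × Bool → Bool := fun q => decide (q = (a, b)) with hpP
          set tw := ((a, b) :: T).takeWhile pP with htw
          set dw := ((a, b) :: T).dropWhile pP with hdw
          have htw_all : ∀ q ∈ tw, q = (a, b) := by
            intro q hq
            have := List.mem_takeWhile_imp hq
            simpa [hpP] using this
          set c := tw.length with hc
          have hrep : tw = List.replicate c (a, b) := List.eq_replicate_of_mem htw_all
          have hc1 : 1 ≤ c := by
            have h0 : tw = (a, b) :: T.takeWhile pP := by
              rw [htw, List.takeWhile_cons_of_pos (by simp [hpP])]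
            rw [hc, h0]
            simp
          have happ : tw ++ dw = (a, b) :: T := by
            rw [htw, hdw]; exact List.takeWhile_append_dropWhile
          have hchainApp : List.Chain' RR (tw ++ dw) := by rw [happ]; exact hRd
          obtain ⟨_, hdwChain, hjun⟩ := List.isChain_append.mp hchainApp
          have hdwlen : dw.length ≤ m := by
            have h2 := congrArg List.length happ
            rw [List.length_append] at h2
            simp only [List.length_cons] at h2 hL
            omega
          have hdwhead : ∀ y ∈ dw.head?, y.1 ≠ a := by
            intro y hy
            have h1 : ¬ pP y = true := by
              have := List.head?_dropWhile_not pP ((a, b) :: T)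
              rw [← hdw, hy] at this
              simpa using this
            have h2 : y ≠ (a, b) := by simpa [hpP] using h1
            have htwne : tw ≠ [] := by
              intro h
              rw [h] at hc
              simp [hc] at hc1
            have hlast : tw.getLast? = some (a, b) := by
              rw [List.getLast?_eq_getLast_of_ne_nil htwne]
              exact congrArg some (htw_all _ (List.getLast_mem htwne))
            have hRR : RR (a, b) y := hjun (a, b) hlast y hy
            intro hya
            rcases hRR with h | h
            · exact h hya.symm
            · exact h2 (Prod.ext hya (h.symm))
          -- group element decomposition
          set e : ℤ := cond b (c : ℤ) (-(c : ℤ)) with he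
          have hpowmk : ∀ (k : ℕ) (p : A × Bool),
              FreeGroup.mk (List.replicate k p) = (FreeGroup.mk [p]) ^ k := by
            intro k p
            induction k with
            | zero => rw [pow_zero, List.replicate_zero]; exact FreeGroup.one_eq_mk.symm
            | succ k ih =>
                rw [List.replicate_succ, pow_succ',
                  show (p :: List.replicate k p) = [p] ++ List.replicate k p from rfl,
                  ← FreeGroup.mul_mk, ih]
          have hma : FreeGroup.mk tw = FreeGroup.of a ^ e := by
            rw [hrep, hpowmk]
            cases hb : b with
            | true =>
                have : FreeGroup.mk [(a, true)] = FreeGroup.of a := rfl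
                rw [this, he, hb]
                simp [zpow_natCast]
            | false =>
                have h3 : FreeGroup.mk [(a, false)] = (FreeGroup.of a)⁻¹ := by
                  have h4 : (FreeGroup.mk [(a, true)])⁻¹ = FreeGroup.mk (FreeGroup.invRev [(a, true)]) :=
                    FreeGroup.inv_mk
                  have h5 : FreeGroup.invRev [(a, true)] = [(a, false)] := by
                    simp [FreeGroup.invRev]
                  rw [h5] at h4
                  exact h4.symm
                rw [h3, he, hb]
                simp [zpow_natCast, inv_pow, zpow_neg]
          have hmk : FreeGroup.mk ((a, b) :: T) = FreeGroup.of a ^ e * FreeGroup.mk dw := by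
            rw [← happ, ← FreeGroup.mul_mk, hma]
          have hene : e ≠ 0 := by
            have : (c : ℤ) ≠ 0 := by exact_mod_cast Nat.one_le_iff_ne_zero.mp hc1
            cases b <;> simp [he] <;> omega
          -- the two series
          set V : Mag A := ((U a ^ e : (Mag A)ˣ) : Mag A) with hV
          set m2 : Mag A := (mu (FreeGroup.mk dw) : Mag A) with hm2
          have hval : (mu (FreeGroup.mk ((a, b) :: T)) : Mag A) = V * m2 := by
            rw [hmk, map_mul, map_zpow, mu_of, Units.val_mul]
          obtain ⟨IH1, IH2⟩ := ihn dw hdwlen hdwChain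
          set kd := dd (dw.map Prod.fst) with hkd
          have hkdhead : ∀ y ∈ kd.head?, y ≠ a := by
            intro y hy
            cases hdwc : dw with
            | nil => rw [hdwc] at hkd; simp [hkd, dd_nil] at hy
            | cons d dt =>
                obtain ⟨r, hr⟩ := dd_head_cons d.1 (dt.map Prod.fst)
                rw [hdwc] at hkd
                simp only [List.map_cons] at hkd
                rw [hkd, hr] at hy
                simp only [List.head?_cons, Option.mem_def, Option.some.injEq] at hy
                subst hy
                exact hdwhead d (by rw [hdwc]; rfl)
          have hkL : dd (((a, b) :: T).map Prod.fst) = a :: kd := by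
            have h4 : ((a, b) :: T).map Prod.fst = List.replicate c a ++ dw.map Prod.fst := by
              rw [← happ, List.map_append, hrep, List.map_replicate]
            rw [h4]
            obtain ⟨c', hc'⟩ : ∃ c', c = c' + 1 := ⟨c - 1, by omega⟩
            rw [hc', dd_rep]
            apply dd_cons_of_head_ne
            intro y hy
            cases hdwc : dw with
            | nil => rw [hdwc] at hy; simp at hy
            | cons d dt =>
                rw [hdwc] at hy
                simp only [List.map_cons, List.head?_cons, Option.mem_def, Option.some.injEq] at hy
                subst hy
                exact hdwhead d (by rw [hdwc]; rfl)
          have hddakd : dd (a :: kd) = a :: kd := by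
            apply dd_of_chain'
            rw [List.Chain', List.isChain_cons]
            exact ⟨fun y hy => (hkdhead y hy).symm, dd_chain' _⟩
          rw [hval, hkL]
          have hVsupp : ∀ w, V w ≠ 0 → ∀ x ∈ w, x = a := U_zpow_supp a e
          constructor
          · -- support claim
            intro w hw
            obtain ⟨i, hi, hterm⟩ := Finset.exists_ne_zero_of_sum_ne_zero hw
            have h1 : V (w.take i) ≠ 0 := fun h => hterm (by rw [h, zero_mul])
            have h2 : m2 (w.drop i) ≠ 0 := fun h => hterm (by rw [h, mul_zero])
            have hIH := IH1 _ h2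
            set q := w.drop i with hq
            have hpall : ∀ x ∈ w.take i, x = a := hVsupp _ h1
            have hprep : w.take i = List.replicate (w.take i).length a :=
              List.eq_replicate_of_mem hpall
            have hwsplit : w = w.take i ++ q := (List.take_append_drop i w).symm
            rw [hwsplit, hprep]
            cases hj : (w.take i).length with
            | zero =>
                simp only [List.replicate_zero, List.nil_append]
                exact hIH.trans (List.sublist_cons_self a kd)
            | succ j =>
                rw [dd_rep]
                cases hqc : q with
                | nil =>
                    rw [dd_singleton]
                    rw [hqc, dd_nil] at hIH
                    exact (List.cons_sublist_cons).2 (List.nil_sublist kd)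
                | cons y t =>
                    by_cases hy : y = a
                    · rw [hy, dd_cons_cons_same]
                      rw [hqc, hy] at hIH
                      exact hIH.trans (List.sublist_cons_self a kd)
                    · rw [dd_cons_ne t hy]
                      rw [hqc] at hIH
                      exact (List.cons_sublist_cons).2 hIH
          · -- value claim
            rw [Mag.mul_apply]
            rw [Finset.sum_eq_single 1]
            · have h5 : (a :: kd).take 1 = [a] := rfl
              have h6 : (a :: kd).drop 1 = kd := rfl
              rw [h5, h6, hV, U_zpow_single]
              exact mul_ne_zero (by exact_mod_cast hene) IH2
            · intro i hi hne
              rcases Nat.lt_or_ge i 1 with h | h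
              · interval_cases i
                have h7 : m2 (a :: kd) = 0 := by
                  by_contra h8
                  have := IH1 _ h8
                  rw [hddakd] at this
                  have := this.length_le
                  simp at this
                rw [List.take_zero, List.drop_zero, h7, mul_zero]
              · -- i ≥ 2 here, since i ≠ 1
                have hi2 : 2 ≤ i := by omega
                have hkdne : kd ≠ [] := by
                  intro h9
                  rw [Finset.mem_range] at hi
                  rw [h9] at hi
                  simp at hi
                  omega
                obtain ⟨y, t, hyt⟩ := List.exists_cons_of_ne_nil hkdne
                have hyne : y ≠ a := hkdhead y (by rw [hyt]; rfl)
                have h10 : V ((a :: kd).take i) = 0 := by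
                  by_contra h11
                  apply hyne
                  apply hVsupp _ h11
                  obtain ⟨i', hi'⟩ : ∃ i', i = i' + 2 := ⟨i - 2, by omega⟩
                  rw [hyt, hi']
                  simp [List.take_cons]
                rw [h10, zero_mul]
            · intro h12
              exfalso
              apply h12
              rw [Finset.mem_range]
              simp
        
theorem mu_injective : Function.Injective (mu : FreeGroup A →* (Mag A)ˣ) := by
  intro g h heq
  have h1 : mu (g * h⁻¹) = 1 := by
    rw [map_mul, map_inv, heq, mul_inv_cancel]
  have h2 : g * h⁻¹ = 1 := by
    by_contra hne
    set x := g * h⁻¹ with hx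
    have hLne : x.toWord ≠ [] := fun hh => hne (FreeGroup.toWord_eq_nil_iff.mp hh)
    obtain ⟨h3, h4⟩ := key x.toWord.length x.toWord le_rfl (chain'_toWord x)
    rw [FreeGroup.mk_toWord] at h4
    apply h4
    rw [h1, Units.val_one]
    apply Mag.one_ne_nil
    obtain ⟨p, T, hpT⟩ := List.exists_cons_of_ne_nil hLne
    rw [hpT]
    obtain ⟨r, hr⟩ := dd_head_cons p.1 (T.map Prod.fst)
    simp only [List.map_cons]
    rw [hr]
    simp
  have := mul_eq_one_iff_eq_inv.mp h2
  rw [this, inv_inv]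

end Key

namespace Mag

theorem mul_subFun (h g₁ g₂ : Mag A) :
    h * (show Mag A from fun w => g₁ w - g₂ w) = fun w => (h * g₁) w - (h * g₂) w := by
  funext w
  erw [mul_apply]; simp only [mul_apply, ← Finset.sum_sub_distrib, mul_sub]

theorem subFun_mul (g₁ g₂ h : Mag A) :
    (show Mag A from fun w => g₁ w - g₂ w) * h = fun w => (g₁ * h) w - (g₂ * h) w := by
  funext w
  erw [mul_apply]; simp only [mul_apply, ← Finset.sum_sub_distrib, sub_mul]

end Mag

section Order
variable [LinearOrder A]

/-- Degree-lexicographic strict order on words. -/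
def dlex (v w : List A) : Prop :=
  v.length < w.length ∨ (v.length = w.length ∧ v < w)

theorem dlex_trans {u v w : List A} (h1 : dlex u v) (h2 : dlex v w) : dlex u w := by
  rcases h1 with h1 | ⟨e1, l1⟩ <;> rcases h2 with h2 | ⟨e2, l2⟩
  · left; omega
  · left; omega
  · left; omega
  · right; exact ⟨e1.trans e2, lt_trans l1 l2⟩

theorem dlex_irrefl (v : List A) : ¬ dlex v v := by
  rintro (h | ⟨_, h⟩)
  · omega
  · exact lt_irrefl _ h

theorem dlex_total {v w : List A} (h : v ≠ w) : dlex v w ∨ dlex w v := by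
  rcases lt_trichotomy v.length w.length with h1 | h1 | h1
  · exact Or.inl (Or.inl h1)
  · rcases lt_trichotomy v w with h2 | h2 | h2
    · exact Or.inl (Or.inr ⟨h1, h2⟩)
    · exact absurd h2 h
    · exact Or.inr (Or.inr ⟨h1.symm, h2⟩)
  · exact Or.inr (Or.inl h1)

/-- Leading-coefficient comparison of two series. -/
def ltM (f g : Mag A) : Prop :=
  ∃ w, (∀ v, dlex v w → f v = g v) ∧ f w < g w

theorem ltM_trans {f g h : Mag A} (h1 : ltM f g) (h2 : ltM g h) : ltM f h := by
  obtain ⟨w1, e1, l1⟩ := h1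
  obtain ⟨w2, e2, l2⟩ := h2
  by_cases hw : w1 = w2
  · subst hw
    exact ⟨w1, fun v hv => (e1 v hv).trans (e2 v hv), lt_trans l1 l2⟩
  · rcases dlex_total hw with hd | hd
    · refine ⟨w1, fun v hv => (e1 v hv).trans (e2 v (dlex_trans hv hd)), ?_⟩
      rw [← e2 w1 hd]
      exact l1
    · refine ⟨w2, fun v hv => (e1 v (dlex_trans hv hd)).trans (e2 v hv), ?_⟩
      rw [e1 w2 hd]
      exact l2

theorem ltM_asymm {f g : Mag A} (h1 : ltM f g) (h2 : ltM g f) : False := by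
  obtain ⟨w1, e1, l1⟩ := h1
  obtain ⟨w2, e2, l2⟩ := h2
  by_cases hw : w1 = w2
  · subst hw
    exact lt_asymm l1 l2
  · rcases dlex_total hw with hd | hd
    · exact absurd (e2 w1 hd) (ne_of_gt l1)
    · exact absurd (e1 w2 hd) (ne_of_gt l2)

theorem conv3_below {u d u' : Mag A} {w0 : List A} (hu : u [] = 1) (hu' : u' [] = 1)
    (hd : ∀ r, dlex r w0 → d r = 0) :
    (∀ v, dlex v w0 → (u * d * u') v = 0) ∧ (u * d * u') w0 = d w0 := by
  have hud : ∀ p : List A, p.length < w0.length → (u * d) p = 0 := by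
    intro p hp
    rw [Mag.mul_apply]
    apply Finset.sum_eq_zero
    intro j _
    have hl : (p.drop j).length < w0.length := by
      rw [List.length_drop]; omega
    rw [hd _ (Or.inl hl), mul_zero]
  have hud2 : ∀ p, dlex p w0 → (u * d) p = 0 := by
    intro p hp
    rcases hp with hp | ⟨hpe, hpl⟩
    · exact hud p hp
    · rw [Mag.mul_apply]
      apply Finset.sum_eq_zero
      intro j hj
      cases j with
      | zero =>
          rw [List.drop_zero, hd p (Or.inr ⟨hpe, hpl⟩), mul_zero]
      | succ j =>
          have hj' : j + 1 ≤ p.length := by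
            have := Finset.mem_range.mp hj; omega
          have hl : (p.drop (j + 1)).length < w0.length := by
            rw [List.length_drop]; omega
          rw [hd _ (Or.inl hl), mul_zero]
  have hud3 : (u * d) w0 = d w0 := by
    rw [Mag.mul_apply]
    rw [Finset.sum_eq_single 0]
    · rw [List.take_zero, List.drop_zero, hu, one_mul]
    · intro j hj hjne
      have hj' : j ≤ w0.length := by have := Finset.mem_range.mp hj; omega
      have hl : (w0.drop j).length < w0.length := by
        rw [List.length_drop]; omega
      rw [hd _ (Or.inl hl), mul_zero]
    · intro h
      exact absurd (Finset.mem_range.mpr (by omega)) h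
  constructor
  · intro v hv
    rw [Mag.mul_apply]
    apply Finset.sum_eq_zero
    intro i hi
    have hi' : i ≤ v.length := by have := Finset.mem_range.mp hi; omega
    have hvlen : v.length ≤ w0.length := by
      rcases hv with h | ⟨h, _⟩; omega; omega
    by_cases hilen : i < v.length
    · have : (v.take i).length < w0.length := by
        rw [List.length_take]; omega
      rw [hud _ this, zero_mul]
    · have hieq : i = v.length := by omega
      subst hieq
      rw [List.take_length, hud2 v hv, zero_mul]
  · rw [Mag.mul_apply]
    rw [Finset.sum_eq_single w0.length]
    · rw [List.take_length, List.drop_length, hud3, hu', mul_one]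
    · intro i hi hine
      have hi' : i < w0.length := by have := Finset.mem_range.mp hi; omega
      have : (w0.take i).length < w0.length := by
        rw [List.length_take]; omega
      rw [hud _ this, zero_mul]
    · intro h
      exact absurd (Finset.self_mem_range_succ w0.length) h

theorem ltM_conj {f g : Mag A} (c : (Mag A)ˣ) (hc : (c : Mag A) [] = 1)
    (hc' : ((c⁻¹ : (Mag A)ˣ) : Mag A) [] = 1) (h : ltM f g) :
    ltM (((c⁻¹ : (Mag A)ˣ) : Mag A) * f * (c : Mag A))
      (((c⁻¹ : (Mag A)ˣ) : Mag A) * g * (c : Mag A)) := by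
  obtain ⟨w0, hbelow, hlt⟩ := h
  set u : Mag A := ((c⁻¹ : (Mag A)ˣ) : Mag A) with hu
  set u' : Mag A := (c : Mag A) with hu'
  set d : Mag A := (show Mag A from fun v => g v - f v) with hdDef
  have hd : ∀ r, dlex r w0 → d r = 0 := by
    intro r hr
    show g r - f r = 0
    rw [hbelow r hr, sub_self]
  obtain ⟨hz, hw⟩ := conv3_below (u := u) (u' := u') (d := d) hc' hc hd
  have hsplit : ∀ v, (u * d * u') v = (u * g * u') v - (u * f * u') v := by
    intro v
    have h1 : u * d = (show Mag A from fun p => (u * g) p - (u * f) p) := by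
      rw [hdDef, Mag.mul_subFun]
    rw [h1, Mag.subFun_mul]
  refine ⟨w0, ?_, ?_⟩
  · intro v hv
    have := hz v hv
    rw [hsplit v] at this
    linarith [this]
  · have := hw
    rw [hsplit w0] at this
    have hdw : d w0 = g w0 - f w0 := rfl
    rw [hdw] at this
    have hpos : (0:ℤ) < g w0 - f w0 := by linarith
    linarith [this, hpos]

theorem listsfin (S : List A) : ∀ n : ℕ, {w : List A | w.length = n ∧ ∀ x ∈ w, x ∈ S}.Finite := by
  intro n
  induction n with
  | zero =>
      apply Set.Finite.subset (Set.finite_singleton ([] : List A))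
      rintro w ⟨h, _⟩
      simp [List.length_eq_zero_iff.mp h]
  | succ n ih =>
      have hsub : {w : List A | w.length = n + 1 ∧ ∀ x ∈ w, x ∈ S} ⊆
          (fun p : A × List A => p.1 :: p.2) ''
            ({x | x ∈ S} ×ˢ {w | w.length = n ∧ ∀ x ∈ w, x ∈ S}) := by
        rintro w ⟨hlen, hmem⟩
        cases w with
        | nil => simp at hlen
        | cons x w' =>
            refine ⟨(x, w'), ⟨hmem x (List.mem_cons_self),
              by simpa using hlen, fun y hy => hmem y (List.mem_cons_of_mem _ hy)⟩, rfl⟩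
      have hfinS : {x : A | x ∈ S}.Finite := S.finite_toSet
      exact Set.Finite.subset (Set.Finite.image _ (hfinS.prod ih)) hsub

theorem ltM_total {f g : Mag A} (S : List A)
    (hf : ∀ w, f w ≠ 0 → ∀ x ∈ w, x ∈ S) (hg : ∀ w, g w ≠ 0 → ∀ x ∈ w, x ∈ S)
    (hne : f ≠ g) : ltM f g ∨ ltM g f := by
  classical
  have hex : ∃ w, f w ≠ g w := by
    by_contra h
    push_neg at h
    exact hne (funext h)
  have hexn : ∃ n, ∃ w : List A, w.length = n ∧ f w ≠ g w :=
    ⟨hex.choose.length, hex.choose, rfl, hex.choose_spec⟩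
  set n0 := Nat.find hexn with hn0
  obtain ⟨w1, hw1len, hw1⟩ := Nat.find_spec hexn
  set T : Set (List A) := {w | w.length = n0 ∧ f w ≠ g w} with hT
  have hTsub : T ⊆ {w | w.length = n0 ∧ ∀ x ∈ w, x ∈ S} := by
    rintro w ⟨h1, h2⟩
    refine ⟨h1, ?_⟩
    by_cases hfw : f w = 0
    · have hgw : g w ≠ 0 := by
        rw [hfw] at h2
        exact fun hh => h2 hh.symm
      exact fun x hx => hg w hgw x hx
    · exact fun x hx => hf w hfw x hx
  have hTfin : T.Finite := (listsfin S n0).subset hTsub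
  have hTne : T.Nonempty := ⟨w1, hw1len, hw1⟩
  obtain ⟨w0, hw0T, hw0min⟩ := Set.exists_min_image T id hTfin hTne
  have hbelow : ∀ v, dlex v w0 → f v = g v := by
    intro v hv
    rcases hv with h | ⟨he, hlex⟩
    · by_contra hne'
      have h1 : n0 ≤ v.length := Nat.find_min' hexn ⟨v, rfl, hne'⟩
      have h2 : w0.length = n0 := hw0T.1
      omega
    · by_contra hne'
      have hvT : v ∈ T := ⟨by rw [he, hw0T.1], hne'⟩
      have := hw0min v hvT
      exact absurd hlex (not_lt.mpr this)
  rcases lt_or_gt_of_ne hw0T.2 with h | h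
  · exact Or.inl ⟨w0, hbelow, h⟩
  · exact Or.inr ⟨w0, fun v hv => (hbelow v hv).symm, h⟩

end Order

section Quandle
variable {A : Type*} [LinearOrder A]

/-- First component, descended to the quotient. -/
def fstQ : Quot (FreeQuandleRel A) → A :=
  Quot.lift (fun p => p.1) (fun _ _ h => h.1)

/-- The conjugate `u⁻¹ a u` associated to a class. -/
def phiQ : Quot (FreeQuandleRel A) → FreeGroup A :=
  Quot.lift (fun p => p.2⁻¹ * FreeGroup.of p.1 * p.2) (by
    rintro p q ⟨h1, h2⟩
    rw [Subgroup.mem_centralizer_iff] at h2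
    have h3 : FreeGroup.of p.1 * (p.2 * q.2⁻¹) = p.2 * q.2⁻¹ * FreeGroup.of p.1 :=
      h2 (FreeGroup.of p.1) rfl
    rw [← h1]
    calc p.2⁻¹ * FreeGroup.of p.1 * p.2
        = p.2⁻¹ * (FreeGroup.of p.1 * (p.2 * q.2⁻¹)) * q.2 := by group
      _ = p.2⁻¹ * (p.2 * q.2⁻¹ * FreeGroup.of p.1) * q.2 := by rw [h3]
      _ = q.2⁻¹ * FreeGroup.of p.1 * q.2 := by group)

theorem fstQ_mk (p : A × FreeGroup A) : fstQ (Quot.mk (FreeQuandleRel A) p) = p.1 := rfl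

theorem phiQ_mk (p : A × FreeGroup A) :
    phiQ (Quot.mk (FreeQuandleRel A) p) = p.2⁻¹ * FreeGroup.of p.1 * p.2 := rfl

theorem injQ {x y : Quot (FreeQuandleRel A)} (h1 : fstQ x = fstQ y) (h2 : phiQ x = phiQ y) :
    x = y := by
  induction x using Quot.ind with | _ p => ?_
  induction y using Quot.ind with | _ q => ?_
  apply Quot.sound
  have h1' : p.1 = q.1 := h1
  refine ⟨h1', ?_⟩
  rw [Subgroup.mem_centralizer_iff]
  rintro z hz
  rw [Set.mem_singleton_iff] at hz
  subst hz
  have h2' : p.2⁻¹ * FreeGroup.of p.1 * p.2 = q.2⁻¹ * FreeGroup.of q.1 * q.2 := h2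
  rw [← h1'] at h2'
  calc FreeGroup.of p.1 * (p.2 * q.2⁻¹)
      = p.2 * (p.2⁻¹ * FreeGroup.of p.1 * p.2) * q.2⁻¹ := by group
    _ = p.2 * (q.2⁻¹ * FreeGroup.of p.1 * q.2) * q.2⁻¹ := by rw [h2']
    _ = p.2 * q.2⁻¹ * FreeGroup.of p.1 := by group

/-- Strict order on the free quandle. -/
def ltQ (x y : Quot (FreeQuandleRel A)) : Prop :=
  fstQ x < fstQ y ∨
    (fstQ x = fstQ y ∧ ltM ((mu (phiQ x) : (Mag A)ˣ) : Mag A) ((mu (phiQ y) : (Mag A)ˣ) : Mag A))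

theorem ltQ_trans {x y z : Quot (FreeQuandleRel A)} (h1 : ltQ x y) (h2 : ltQ y z) : ltQ x z := by
  rcases h1 with h1 | ⟨e1, l1⟩ <;> rcases h2 with h2 | ⟨e2, l2⟩
  · exact Or.inl (lt_trans h1 h2)
  · exact Or.inl (e2 ▸ h1)
  · exact Or.inl (e1 ▸ h2)
  · exact Or.inr ⟨e1.trans e2, ltM_trans l1 l2⟩

theorem ltQ_irrefl (x : Quot (FreeQuandleRel A)) : ¬ ltQ x x := by
  rintro (h | ⟨_, h⟩)
  · exact lt_irrefl _ h
  · exact ltM_asymm h h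

theorem ltQ_trichotomous (x y : Quot (FreeQuandleRel A)) : ltQ x y ∨ x = y ∨ ltQ y x := by
  rcases lt_trichotomy (fstQ x) (fstQ y) with h | h | h
  · exact Or.inl (Or.inl h)
  · by_cases hphi : phiQ x = phiQ y
    · exact Or.inr (Or.inl (injQ h hphi))
    · have hmu : mu (phiQ x) ≠ mu (phiQ y) := fun hh => hphi (mu_injective hh)
      have hval : ((mu (phiQ x) : (Mag A)ˣ) : Mag A) ≠ ((mu (phiQ y) : (Mag A)ˣ) : Mag A) :=
        fun hh => hmu (Units.ext hh)
      set S : List A := (phiQ x).toWord.map Prod.fst ++ (phiQ y).toWord.map Prod.fst with hS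
      have hfx : ∀ w, ((mu (phiQ x) : (Mag A)ˣ) : Mag A) w ≠ 0 → ∀ t ∈ w, t ∈ S := by
        apply mu_supp
        intro p hp
        exact List.mem_append_left _ (List.mem_map_of_mem hp)
      have hfy : ∀ w, ((mu (phiQ y) : (Mag A)ˣ) : Mag A) w ≠ 0 → ∀ t ∈ w, t ∈ S := by
        apply mu_supp
        intro p hp
        exact List.mem_append_right _ (List.mem_map_of_mem hp)
      rcases ltM_total S hfx hfy hval with hlt | hlt
      · exact Or.inl (Or.inr ⟨h, hlt⟩)
      · exact Or.inr (Or.inr (Or.inr ⟨h.symm, hlt⟩))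
  · exact Or.inr (Or.inr (Or.inl h))

theorem ltQ_star
    (star : Quot (FreeQuandleRel A) → Quot (FreeQuandleRel A) → Quot (FreeQuandleRel A))
    (hstar : ∀ p q : A × FreeGroup A, star (Quot.mk _ p) (Quot.mk _ q) =
      Quot.mk _ (p.1, p.2 * q.2⁻¹ * FreeGroup.of q.1 * q.2))
    {x y : Quot (FreeQuandleRel A)} (z : Quot (FreeQuandleRel A)) (h : ltQ x y) :
    ltQ (star x z) (star y z) := by
  -- equivariance of fstQ and phiQ
  have hfst : ∀ u : Quot (FreeQuandleRel A), fstQ (star u z) = fstQ u := by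
    intro u
    induction u using Quot.ind with | _ p => ?_
    induction z using Quot.ind with | _ q => ?_
    rw [hstar p q]
    rfl
  have hphi : ∀ u : Quot (FreeQuandleRel A), phiQ (star u z) = (phiQ z)⁻¹ * phiQ u * phiQ z := by
    intro u
    induction u using Quot.ind with | _ p => ?_
    induction z using Quot.ind with | _ q => ?_
    rw [hstar p q, phiQ_mk, phiQ_mk, phiQ_mk]
    group
  rcases h with h | ⟨e, l⟩
  · exact Or.inl (by rw [hfst x, hfst y]; exact h)
  · refine Or.inr ⟨by rw [hfst x, hfst y]; exact e, ?_⟩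
    have hx : ((mu (phiQ (star x z)) : (Mag A)ˣ) : Mag A)
        = (((mu (phiQ z))⁻¹ : (Mag A)ˣ) : Mag A) * ((mu (phiQ x) : (Mag A)ˣ) : Mag A)
          * ((mu (phiQ z) : (Mag A)ˣ) : Mag A) := by
      rw [hphi x, map_mul, map_mul, map_inv, Units.val_mul, Units.val_mul]
    have hy : ((mu (phiQ (star y z)) : (Mag A)ˣ) : Mag A)
        = (((mu (phiQ z))⁻¹ : (Mag A)ˣ) : Mag A) * ((mu (phiQ y) : (Mag A)ˣ) : Mag A)
          * ((mu (phiQ z) : (Mag A)ˣ) : Mag A) := by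
      rw [hphi y, map_mul, map_mul, map_inv, Units.val_mul, Units.val_mul]
    rw [hx, hy]
    apply ltM_conj (mu (phiQ z)) (mu_nil _)
    · have : (mu (phiQ z))⁻¹ = mu ((phiQ z)⁻¹) := (map_inv mu (phiQ z)).symm
      rw [this]
      exact mu_nil _
    · exact l

end Quandle
end MagnusAux

open MagnusAux in
/-- Free quandles are right-orderable. -/
theorem free_quandle_rightOrderable (A : Type*)
    (star : Quot (FreeQuandleRel A) → Quot (FreeQuandleRel A) → Quot (FreeQuandleRel A))
    (hstar : ∀ p q : A × FreeGroup A, star (Quot.mk _ p) (Quot.mk _ q) =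
      Quot.mk _ (p.1, p.2 * q.2⁻¹ * FreeGroup.of q.1 * q.2)) :
    ∃ _ : LinearOrder (Quot (FreeQuandleRel A)),
      ∀ x y z : Quot (FreeQuandleRel A), x < y → star x z < star y z := by
  classical
  letI : LinearOrder A := IsWellOrder.linearOrder WellOrderingRel
  haveI hirr : IsIrrefl (Quot (FreeQuandleRel A)) ltQ := ⟨ltQ_irrefl⟩
  haveI htrans : IsTrans (Quot (FreeQuandleRel A)) ltQ := ⟨fun _ _ _ => ltQ_trans⟩
  haveI htri : IsTrichotomous (Quot (FreeQuandleRel A)) ltQ := ⟨fun a b h1 h2 => by rcases ltQ_trichotomous a b with h | h | h <;> tauto⟩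
  haveI : IsStrictTotalOrder (Quot (FreeQuandleRel A)) ltQ := {}
  letI lo : LinearOrder (Quot (FreeQuandleRel A)) := linearOrderOfSTO ltQ
  refine ⟨lo, ?_⟩
  intro x y z hxy
  have h1 : ltQ x y := hxy
  have h2 : ltQ (star x z) (star y z) := ltQ_star star hstar z h1
  exact h2
end

section
/- Let Q be a quandle such that the natural map η : Q → Conj(Env(Q)) is injective. If Env(Q) is a bi-orderable group, then Q is a right-orderable quandle. -/
/-- Let Q be a quandle and E its enveloping group, i.e. a group with a map
η : Q → E satisfying η(x*y) = η(y)⁻¹ η(x) η(y) together with the universal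
property of the presentation of Env(Q). If η : Q → Conj(Env(Q)) is injective
and Env(Q) is bi-orderable, then Q is a right-orderable quandle. -/
theorem env_biorderable_imp_rightOrderable {Q E : Type*} (q : PaperQuandle Q)
    [Group E] (η : Q → E)
    (hrel : ∀ x y : Q, η (q.op x y) = (η y)⁻¹ * η x * η y)
    (huniv : ∀ (H : Type) [Group H] (f : Q → H),
      (∀ x y : Q, f (q.op x y) = (f y)⁻¹ * f x * f y) →
      ∃! φ : E →* H, ∀ x : Q, φ (η x) = f x)
    (hinj : Function.Injective η)
    (hbi : ∃ _ : LinearOrder E, (∀ a b c : E, a < b → a * c < b * c) ∧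
      (∀ a b c : E, a < b → c * a < c * b)) :
    ∃ _ : LinearOrder Q, ∀ x y z : Q, x < y → q.op x z < q.op y z := by
  obtain ⟨lo, hr, hl⟩ := hbi
  refine ⟨LinearOrder.lift' η hinj, ?_⟩
  intro x y z hxy
  have hlt : η x < η y := hxy
  have : (η z)⁻¹ * η x * η z < (η z)⁻¹ * η y * η z := hr _ _ _ (hl _ _ _ hlt)
  show η (q.op x z) < η (q.op y z)
  rw [hrel, hrel]
  exact this
end

section
/- Let Q be a quandle generated by elements a_1, a_2 satisfying a_1 = (a_2 * a_1) * a_2 and a_2 = (a_1 * a_2) * a_1, with a_1 ≠ a_2. Then Q is not left-orderable. -/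
/-- Auxiliary contradiction: if `y = (x*y)*x` and `x < y` under an order
compatible with left multiplication, we get a contradiction. -/
lemma paperQuandle_aux {Q : Type*} (q : PaperQuandle Q) [LinearOrder Q]
    (hmono : ∀ x y z : Q, x < y → q.op z x < q.op z y)
    (x y : Q) (hxy : y = q.op (q.op x y) x) (h : x < y) : False := by
  set c := q.op x y with hc
  have hca : q.op c x = y := hxy.symm
  have hcc : q.op c c = c := q.idem c
  -- x < c
  have h1c : x < c := by
    have := hmono x y x h
    rwa [q.idem x] at this
  -- y < c
  have h2c : y < c := by
    have := hmono x c c h1c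
    rwa [hca, hcc] at this
  -- y < c*y
  have h3 : y < q.op c y := by
    have := hmono x y c h
    rwa [hca] at this
  -- c*y < c
  have h4 : q.op c y < c := by
    have := hmono y c c h2c
    rwa [hcc] at this
  -- key relation: (c*y)*c = y
  have hrel : q.op (q.op c y) c = y := by
    calc q.op (q.op c y) c = q.op (q.op c y) (q.op x y) := by rw [← hc]
      _ = q.op (q.op c x) y := (q.distrib c x y).symm
      _ = q.op y y := by rw [hca]
      _ = y := q.idem y
  -- then c*y < y, contradicting h3
  have h5 : q.op c y < y := by
    have := hmono (q.op c y) c (q.op c y) h4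
    rwa [q.idem (q.op c y), hrel] at this
  exact lt_asymm h3 h5

/-- A quandle generated by a₁, a₂ with a₁ = (a₂*a₁)*a₂, a₂ = (a₁*a₂)*a₁ and
a₁ ≠ a₂ (the knot quandle of the trefoil) is not left-orderable. -/
theorem trefoil_quandle_not_leftOrderable {Q : Type*} (q : PaperQuandle Q)
    (a₁ a₂ : Q)
    (hgen : ∀ S : Set Q, a₁ ∈ S → a₂ ∈ S →
      (∀ x y : Q, x ∈ S → y ∈ S → q.op x y ∈ S) →
      (∀ x y : Q, x ∈ S → y ∈ S → q.inv x y ∈ S) → S = Set.univ)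
    (h1 : a₁ = q.op (q.op a₂ a₁) a₂)
    (h2 : a₂ = q.op (q.op a₁ a₂) a₁)
    (hne : a₁ ≠ a₂) :
    ¬ ∃ _ : LinearOrder Q, ∀ x y z : Q, x < y → q.op z x < q.op z y := by
  rintro ⟨lo, hmono⟩
  rcases lt_or_gt_of_ne hne with h | h
  · exact paperQuandle_aux q hmono a₁ a₂ h2 h
  · exact paperQuandle_aux q hmono a₂ a₁ h1 h
end

section
/- Let Q be a quandle with a right ordering <, elements a_i ∈ Q indexed by integers with a_{i+m} = a_i, satisfying a_{i-n} = a_i * a_n * a_{n-1} * ... * a_1 for all i ∈ ℤ, where 2 ≤ m < n, d = gcd(m,n) < m, and a_1 ≠ a_{d+1}. Then a contradiction follows; i.e., no such right ordering exists. -/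
/-- No right ordering is compatible with the relations of the link quandle of
the torus link T(m,n) when neither of m, n divides the other: given a right
ordering < on Q, elements aᵢ (i ∈ ℤ) with a_{i+m} = aᵢ satisfying
a_{i-n} = aᵢ * aₙ * a_{n-1} * ⋯ * a₁ for all i, with 2 ≤ m < n,
d = gcd(m,n) < m and a₁ ≠ a_{d+1}, a contradiction follows. -/
theorem torus_link_quandle_not_rightOrderable {Q : Type*} (q : PaperQuandle Q)
    [LinearOrder Q]
    (hro : ∀ x y z : Q, x < y → q.op x z < q.op y z)
    (m n : ℕ) (hm : 2 ≤ m) (hmn : m < n) (hd : Nat.gcd m n < m)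
    (a : ℤ → Q) (hper : ∀ i : ℤ, a (i + (m : ℤ)) = a i)
    (lprod : ℤ → ℕ → Q)
    (hlprod0 : ∀ i : ℤ, lprod i 0 = a i)
    (hlprodS : ∀ (i : ℤ) (k : ℕ), lprod i (k + 1) = q.op (lprod i k) (a ((n : ℤ) - k)))
    (hrel : ∀ i : ℤ, a (i - (n : ℤ)) = lprod i n)
    (hne : a 1 ≠ a ((Nat.gcd m n : ℤ) + 1)) :
    False := by
  -- strict monotonicity of the partial products in the initial value
  have mono : ∀ (k : ℕ) (i i' : ℤ), a i < a i' → lprod i k < lprod i' k := by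
    intro k
    induction k with
    | zero => intro i i' h; simpa [hlprod0] using h
    | succ k ih =>
      intro i i' h
      rw [hlprodS, hlprodS]
      exact hro _ _ _ (ih i i' h)
  -- a function with period p has period z*p for any integer z
  have gen : ∀ p : ℤ, (∀ i, a (i + p) = a i) → ∀ (z : ℤ) (i : ℤ), a (i + z * p) = a i := by
    intro p hp z
    induction z using Int.induction_on with
    | zero => simp
    | succ k ih =>
      intro i
      have h1 : i + ((k : ℤ) + 1) * p = (i + (k : ℤ) * p) + p := by ring
      rw [h1, hp, ih]
    | pred k ih =>
      intro i
      have h1 : i + (-(k : ℤ) - 1) * p = (i + (-(k : ℤ)) * p) - p := by ring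
      have h2 := hp (i + (-(k : ℤ)) * p - p)
      rw [show i + (-(k : ℤ)) * p - p + p = i + (-(k : ℤ)) * p by ring] at h2
      rw [h1, ← h2]
      exact ih i
  have hmp := gen (m : ℤ) hper
  set g := Nat.gcd m n with hg
  have hg0 : 0 < g := Nat.gcd_pos_of_pos_left n (by omega)
  obtain ⟨m', hm'⟩ := Nat.gcd_dvd_left m n
  obtain ⟨n', hn'⟩ := Nat.gcd_dvd_right m n
  rw [← hg] at hm' hn'
  set N := m / g with hN
  have hNm' : N = m' := by rw [hN, hm', Nat.mul_div_cancel_left _ hg0]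
  have hm'0 : m' ≠ 0 := by rintro rfl; simp only [Nat.mul_zero] at hm'; omega
  have hN1 : 1 ≤ N := by rw [hNm']; omega
  have hnat : m' * n = n' * m := by rw [hm', hn']; ring
  have key : ((N : ℤ)) * n = (n' : ℤ) * m := by
    rw [hNm']; exact_mod_cast hnat
  -- period N*n equals period n'*m, so a (i - N*n) = a i
  have hfix : ∀ i : ℤ, a (i - (N : ℤ) * n) = a i := by
    intro i
    have : i - (N : ℤ) * n = i + (-(n' : ℤ)) * m := by rw [neg_mul, ← key]; ring
    rw [this]; exact hmp _ _
  -- main step: a (i - n) = a i for all i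
  have hstep : ∀ i : ℤ, a (i - (n : ℤ)) = a i := by
    intro i
    rcases lt_trichotomy (a (i - (n : ℤ))) (a i) with h | h | h
    · exfalso
      have chain : ∀ j : ℕ, a (i - ((j : ℤ) + 1) * n) < a (i - (j : ℤ) * n) := by
        intro j
        induction j with
        | zero => simpa using h
        | succ j ih =>
          have h2 := mono n _ _ ih
          rw [← hrel, ← hrel] at h2
          have e1 : i - ((j : ℤ) + 1) * n - n = i - ((((j+1) : ℕ) : ℤ) + 1) * n := by
            push_cast; ring
          have e2 : i - (j : ℤ) * n - n = i - (((j+1 : ℕ)) : ℤ) * n := by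
            push_cast; ring
          rw [e1, e2] at h2
          exact h2
      have anti : StrictAnti (fun j : ℕ => a (i - (j : ℤ) * n)) := by
        apply strictAnti_nat_of_succ_lt
        intro j
        have e : (((j+1 : ℕ)) : ℤ) = (j : ℤ) + 1 := by push_cast; ring
        simp only [e]
        exact chain j
      have hlt := anti (show 0 < N by omega)
      simp only at hlt
      rw [hfix i] at hlt
      simp at hlt
    · exact h
    · exfalso
      have chain : ∀ j : ℕ, a (i - (j : ℤ) * n) < a (i - ((j : ℤ) + 1) * n) := by
        intro j
        induction j with
        | zero => simpa using h
        | succ j ih =>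
          have h2 := mono n _ _ ih
          rw [← hrel, ← hrel] at h2
          have e1 : i - ((j : ℤ) + 1) * n - n = i - ((((j+1) : ℕ) : ℤ) + 1) * n := by
            push_cast; ring
          have e2 : i - (j : ℤ) * n - n = i - (((j+1 : ℕ)) : ℤ) * n := by
            push_cast; ring
          rw [e1, e2] at h2
          exact h2
      have smono : StrictMono (fun j : ℕ => a (i - (j : ℤ) * n)) := by
        apply strictMono_nat_of_lt_succ
        intro j
        have e : (((j+1 : ℕ)) : ℤ) = (j : ℤ) + 1 := by push_cast; ring
        simp only [e]
        exact chain j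
      have hlt := smono (show 0 < N by omega)
      simp only at hlt
      rw [hfix i] at hlt
      simp at hlt
  -- so a has period n as well
  have hnper : ∀ i : ℤ, a (i + (n : ℤ)) = a i := by
    intro i
    have := hstep (i + n)
    simpa using this.symm
  have hnp := gen (n : ℤ) hnper
  -- Bezout: g = m * A + n * B
  have bez := Nat.gcd_eq_gcd_ab m n
  apply hne
  have e1 : ((g : ℤ) + 1) = (1 + Nat.gcdB m n * n) + Nat.gcdA m n * m := by
    rw [hg, bez]; ring
  calc a 1 = a (1 + Nat.gcdB m n * (n : ℤ)) := (hnp _ _).symm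
    _ = a ((1 + Nat.gcdB m n * (n : ℤ)) + Nat.gcdA m n * m) := (hmp _ _).symm
    _ = a ((g : ℤ) + 1) := by rw [e1]
end
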